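/- If (T,r) and (T',r') are rooted trees that satisfy the level-label condition, with common height h, then there exists a collection of bijective maps φ_i: T_i → T'_i for i = 0, 1, ..., h such that φ_{i+1}(parent_T(v)) = parent_{T'}(φ_i(v)) for all v ∈ T_i and all i = 0, 1, ..., h−1. -/

import Mathlib

attribute [local instance] Classical.propDecidable

namespace AHU

variable {V : Type*}

/-- The height of the rooted tree `(G, r)`: maximum distance from the root. -/
noncomputable def height (G : SimpleGraph V) [Fintype V] (r : V) : ℕ :=
  Finset.univ.sup fun v => G.dist r v

/-- The level of a vertex: height minus distance from the root. -/
noncomputable def lvl (G : SimpleGraph V) [Fintype V] (r : V) (v : V) : ℕ :=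
  height G r - G.dist r v

/-- `T_i`: the set of vertices at level `i`. -/
noncomputable def levelSet (G : SimpleGraph V) [Fintype V] (r : V) (i : ℕ) : Finset V :=
  Finset.univ.filter fun v => lvl G r v = i

/-- A vertex is a leaf if it has degree at most one. -/
def IsLeaf (G : SimpleGraph V) (v : V) : Prop :=
  {u | G.Adj v u}.ncard ≤ 1

/-- The parent of `v ≠ r`: the unique neighbour of `v` lying closer to the root
(on the unique path from `r` to `v`).  For `v = r` we return `v` itself. -/
noncomputable def parent (G : SimpleGraph V) (r v : V) : V :=
  if h : ∃ p, G.Adj p v ∧ G.dist r p + 1 = G.dist r v then h.choose else v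

/-- The set of children of `u`. -/
noncomputable def children (G : SimpleGraph V) [Fintype V] (r u : V) : Finset V :=
  Finset.univ.filter fun v => v ≠ r ∧ parent G r v = u

/-- The label-compression of a finite set `S` of tuples: the unique order isomorphism
from `(S, ≤lex)` onto `{0, …, |S| - 1}`, i.e. `s ↦ #{t ∈ S | t <lex s}`. -/
noncomputable def compress (S : Finset (List ℕ)) (s : List ℕ) : ℕ :=
  (S.filter fun t => List.Lex (· < ·) t s).card

/-- Auxiliary, level-indexed version of the compressed descendant labeling:
`labelAt G r i v` is the label of a vertex `v` of level `i`. -/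
noncomputable def labelAt (G : SimpleGraph V) [Fintype V] (r : V) : ℕ → V → List ℕ
  | 0, _ => []
  | (i + 1), v =>
      if IsLeaf G v then []
      else
        Multiset.sort
          ((children G r v).val.map fun u =>
            compress ((levelSet G r i).image (labelAt G r i)) (labelAt G r i u)) (· ≤ ·)

/-- The compressed descendant labeling `cdl : V(T) → ℕ*`. -/
noncomputable def cdl (G : SimpleGraph V) [Fintype V] (r : V) (v : V) : List ℕ :=
  labelAt G r (lvl G r v) v

/-- `𝓛(W)`: the multiset of compressed descendant labels of the vertices of `W`. -/
noncomputable def labels (G : SimpleGraph V) [Fintype V] (r : V) (W : Finset V) :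
    Multiset (List ℕ) :=
  W.val.map (cdl G r)

/-- The level-label condition: the multisets of labels agree on every level
`i = 0, 1, …, max(height T, height T')`. -/
noncomputable def LevelLabelCondition {V' : Type*} (G : SimpleGraph V) [Fintype V] (r : V)
    (G' : SimpleGraph V') [Fintype V'] (r' : V') : Prop :=
  ∀ i ≤ max (height G r) (height G' r' ),
    labels G r (levelSet G r i) = labels G' r' (levelSet G' r' i)

/-! Descend from the roots level by level, keeping a bijection `T_i → T'_i` that preserves
`cdl`. Compression is injective on the labels of a level, and by the level-label condition both
trees compress level `i` with the same table; so for a non-root vertex `u` of level `i + 1`,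
`cdl u` determines the multiset of labels of its children, and `u` and its image have children
with the same labels. Matching these children label by label, under every pair of corresponding
parents, gives the bijection on level `i`, compatible with `parent`. -/

theorem _root_.Set.exists_bijOn_of_bijOn_fibers {α β γ : Type*} {s : Set α} {t : Set β}
    {f : α → γ} {g : β → γ} (h : ∀ c, ∃ e : α → β, Set.BijOn e (s ∩ f ⁻¹' {c}) (t ∩ g ⁻¹' {c})) :
    ∃ e : α → β, Set.BijOn e s t ∧ ∀ a ∈ s, g (e a) = f a := by
  choose e he using h
  have hmaps : ∀ a ∈ s, e (f a) a ∈ t ∩ g ⁻¹' {f a} := fun a ha => (he (f a)).mapsTo ⟨ha, rfl⟩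
  refine ⟨fun a => e (f a) a, ⟨fun a ha => (hmaps a ha).1, fun a ha a' ha' heq => ?_,
    fun b hb => ?_⟩, fun a ha => (hmaps a ha).2⟩
  · have hf : f a = f a' := by
      rw [← (hmaps a ha).2, ← (hmaps a' ha').2]
      exact congrArg g heq
    exact (he (f a)).injOn ⟨ha, rfl⟩ ⟨ha', hf.symm⟩ (by simpa only [hf] using heq)
  · obtain ⟨a, ⟨ha, hfa : f a = g b⟩, hab⟩ := (he (g b)).surjOn ⟨hb, rfl⟩
    exact ⟨a, ha, by rwa [← hfa] at hab⟩

theorem _root_.Finset.exists_bijOn_of_map_eq {α β γ : Type*} [Nonempty β] {s : Finset α}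
    {t : Finset β} {f : α → γ} {g : β → γ} (h : s.val.map f = t.val.map g) :
    ∃ e : α → β, Set.BijOn e s t ∧ ∀ a ∈ s, g (e a) = f a := by
  classical
  refine Set.exists_bijOn_of_bijOn_fibers fun c => ?_
  have hcard : (s.filter (c = f ·)).card = (t.filter (c = g ·)).card := by
    have := congrArg (Multiset.count c) h
    rwa [Multiset.count_map, Multiset.count_map] at this
  have := Set.Finite.exists_bijOn_of_encard_eq (s.filter (c = f ·)).finite_toSet
    (t := ((t.filter (c = g ·) : Finset β) : Set β))
    (by simp only [Set.encard_coe_eq_coe_finsetCard, hcard])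
  simpa [Set.inter_def, eq_comm] using this

theorem _root_.Multiset.eq_of_map_eq_of_injOn {α β : Type*} {f : α → β} {S : Set α}
    (hf : Set.InjOn f S) {s t : Multiset α} (hs : ∀ x ∈ s, x ∈ S) (ht : ∀ x ∈ t, x ∈ S)
    (h : s.map f = t.map f) : s = t := by
  rcases isEmpty_or_nonempty α with hα | hα
  · rw [Multiset.eq_zero_of_forall_notMem (s := s) isEmptyElim,
      Multiset.eq_zero_of_forall_notMem (s := t) isEmptyElim]
  have hinv : ∀ u : Multiset α, (∀ x ∈ u, x ∈ S) → (u.map f).map (Function.invFunOn f S) = u :=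
    fun u hu => by
      rw [Multiset.map_map]
      exact (Multiset.map_congr rfl fun x hx => hf.leftInvOn_invFunOn (hu x hx)).trans u.map_id
  rw [← hinv s hs, h, hinv t ht]

theorem _root_.Nat.exists_seq_of_step_down {X : Type*} {P : ℕ → X → Prop}
    {R : ℕ → X → X → Prop} {h : ℕ} (top : ∃ x, P h x)
    (step : ∀ i < h, ∀ x, P (i + 1) x → ∃ y, P i y ∧ R i y x) :
    ∃ φ : ℕ → X, (∀ i ≤ h, P i (φ i)) ∧ ∀ i < h, R i (φ i) (φ (i + 1)) := by
  suffices ∀ n, ∃ φ : ℕ → X, (∀ i ≤ h, h ≤ i + n → P i (φ i)) ∧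
      ∀ i < h, h ≤ i + n → R i (φ i) (φ (i + 1)) by
    obtain ⟨φ, hP, hR⟩ := this h
    exact ⟨φ, fun i hi => hP i hi (by omega), fun i hi => hR i hi (by omega)⟩
  intro n
  induction n with
  | zero =>
    obtain ⟨x, hx⟩ := top
    exact ⟨fun _ => x, fun i hi hin => (by omega : i = h) ▸ hx, fun i hi hin => by omega⟩
  | succ n ih =>
    obtain ⟨φ, hP, hR⟩ := ih
    by_cases hn : h ≤ n
    · exact ⟨φ, fun i hi _ => hP i hi (by omega), fun i hi _ => hR i hi (by omega)⟩
    obtain ⟨y, hy, hyR⟩ := step (h - n - 1) (by omega) (φ (h - n))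
      (by rw [show h - n - 1 + 1 = h - n by omega]; exact hP _ (by omega) (by omega))
    refine ⟨Function.update φ (h - n - 1) y, fun i hi hin => ?_, fun i hi hin => ?_⟩
    · rcases eq_or_ne i (h - n - 1) with rfl | hne
      · rwa [Function.update_self]
      · rw [Function.update_of_ne hne]
        exact hP i hi (by omega)
    · rw [Function.update_of_ne (by omega : i + 1 ≠ h - n - 1)]
      rcases eq_or_ne i (h - n - 1) with rfl | hne
      · rwa [Function.update_self, show h - n - 1 + 1 = h - n by omega]
      · rw [Function.update_of_ne hne]
        exact hR i hi (by omega)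

section RootedTree

variable {G : SimpleGraph V} {r : V}

theorem exists_adj_dist_add_one_eq (hG : G.Connected) {v : V} (hv : v ≠ r) :
    ∃ p, G.Adj p v ∧ G.dist r p + 1 = G.dist r v := by
  obtain ⟨q, hq⟩ := hG.exists_walk_length_eq_dist v r
  cases q with
  | nil => exact absurd rfl hv
  | @cons _ p _ hvp q =>
    refine ⟨p, hvp.symm, ?_⟩
    have hp : G.dist r p ≤ q.length := SimpleGraph.dist_comm (G := G) ▸ SimpleGraph.dist_le q
    have hv : G.dist r v ≤ G.dist r p + G.dist p v := hG.dist_triangle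
    rw [SimpleGraph.dist_comm (u := p), SimpleGraph.dist_eq_one_iff_adj.mpr hvp] at hv
    rw [SimpleGraph.Walk.length_cons, SimpleGraph.dist_comm] at hq
    omega

theorem parent_spec (hG : G.Connected) {v : V} (hv : v ≠ r) :
    G.Adj (parent G r v) v ∧ G.dist r (parent G r v) + 1 = G.dist r v := by
  have h := exists_adj_dist_add_one_eq hG hv
  rw [parent, dif_pos h]
  exact h.choose_spec

variable [Fintype V]

theorem dist_le_height (v : V) : G.dist r v ≤ height G r :=
  Finset.le_sup (Finset.mem_univ v)

theorem mem_levelSet {i : ℕ} {v : V} : v ∈ levelSet G r i ↔ lvl G r v = i := by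
  simp [levelSet]

theorem mem_children {u v : V} : v ∈ children G r u ↔ v ≠ r ∧ parent G r v = u := by
  simp [children]

theorem map_children_val_parent {X : Type*} (f : V → V → X) (u : V) :
    (children G r u).val.map (fun v => f (parent G r v) v) = (children G r u).val.map (f u) :=
  Multiset.map_congr rfl fun v hv => by rw [(mem_children.mp hv).2]

theorem ne_root_of_mem_levelSet {i : ℕ} {v : V} (hv : v ∈ levelSet G r i)
    (hi : i ≠ height G r) : v ≠ r := by
  rintro rfl
  rw [mem_levelSet, lvl, SimpleGraph.dist_self, Nat.sub_zero] at hv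
  exact hi hv.symm

theorem levelSet_height (hG : G.Connected) : levelSet G r (height G r) = {r} := by
  ext v
  have := dist_le_height (G := G) (r := r) v
  rw [mem_levelSet, Finset.mem_singleton, lvl, eq_comm (b := r), ← hG.dist_eq_zero_iff]
  omega

theorem lvl_parent (hG : G.Connected) {v : V} (hv : v ≠ r) :
    lvl G r (parent G r v) = lvl G r v + 1 := by
  have := (parent_spec hG hv).2
  have := dist_le_height (G := G) (r := r) v
  unfold lvl
  omega

theorem mem_levelSet_of_mem_children (hG : G.Connected) {i : ℕ} {u v : V}
    (hu : u ∈ levelSet G r (i + 1)) (hv : v ∈ children G r u) : v ∈ levelSet G r i := by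
  obtain ⟨hvr, rfl⟩ := mem_children.mp hv
  rw [mem_levelSet, lvl_parent hG hvr] at hu
  rw [mem_levelSet]
  omega

theorem levelSet_val_eq_bind_children (hG : G.Connected) {i : ℕ} (hi : i < height G r) :
    (levelSet G r i).val = (levelSet G r (i + 1)).val.bind fun u => (children G r u).val := by
  have hdisj : (levelSet G r (i + 1) : Set V).PairwiseDisjoint (children G r) :=
    fun u _ u' _ huu' => Finset.disjoint_left.mpr fun v hu hu' =>
      huu' ((mem_children.mp hu).2.symm.trans (mem_children.mp hu').2)
  rw [← Finset.disjiUnion_val _ _ hdisj]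
  congr 1
  ext v
  simp only [Finset.mem_disjiUnion, mem_children, mem_levelSet]
  constructor
  · intro hv
    have hvr := ne_root_of_mem_levelSet (mem_levelSet.mpr hv) hi.ne
    exact ⟨_, by rw [lvl_parent hG hvr, hv], hvr, rfl⟩
  · rintro ⟨_, hu, hvr, rfl⟩
    rw [lvl_parent hG hvr] at hu
    omega

theorem children_root (hG : G.Connected) (hh : 0 < height G r) :
    children G r r = levelSet G r (height G r - 1) := by
  have hroot : ∀ u, u = r ↔ lvl G r u = height G r := fun u => by
    rw [← mem_levelSet, levelSet_height hG, Finset.mem_singleton]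
  ext v
  rw [mem_children, mem_levelSet]
  constructor
  · rintro ⟨hvr, hv⟩
    rw [hroot, lvl_parent hG hvr] at hv
    omega
  · intro hv
    have hvr : v ≠ r := by rw [Ne, hroot]; omega
    rw [hroot, lvl_parent hG hvr]
    exact ⟨hvr, by omega⟩

theorem children_eq_empty_of_isLeaf (hG : G.Connected) {u : V} (hu : u ≠ r)
    (hleaf : IsLeaf G u) : children G r u = ∅ := by
  refine Finset.eq_empty_of_forall_notMem fun v hv => ?_
  obtain ⟨hvr, rfl⟩ := mem_children.mp hv
  have hv := parent_spec hG hvr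
  have hu := parent_spec hG hu
  have hne : v ≠ parent G r (parent G r v) := by
    intro heq
    rw [← heq] at hu
    omega
  exact hne ((Set.ncard_le_one (Set.toFinite _)).mp hleaf _ hv.1 _ hu.1.symm)

end RootedTree

theorem compress_strictMonoOn (S : Finset (List ℕ)) : StrictMonoOn (compress S) S := by
  intro s hs t _ hst
  refine Finset.card_lt_card <| (Finset.ssubset_iff_of_subset fun u hu => ?_).mpr
    ⟨s, Finset.mem_filter.mpr ⟨hs, hst⟩, fun h => lt_irrefl s (Finset.mem_filter.mp h).2⟩
  rw [Finset.mem_filter] at hu ⊢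
  exact ⟨hu.1, lt_trans hu.2 hst⟩

section Labels

variable [Fintype V] {G : SimpleGraph V} {r : V}

theorem cdl_eq_labelAt {i : ℕ} {v : V} (hv : v ∈ levelSet G r i) :
    cdl G r v = labelAt G r i v := by
  rw [cdl, mem_levelSet.mp hv]

theorem image_labelAt_levelSet (i : ℕ) :
    (levelSet G r i).image (labelAt G r i) = (labels G r (levelSet G r i)).toFinset :=
  congrArg Multiset.toFinset <| Multiset.map_congr rfl fun _ hv => (cdl_eq_labelAt hv).symm

theorem mem_labels_of_mem_children (hG : G.Connected) {i : ℕ} {u : V}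
    (hu : u ∈ levelSet G r (i + 1)) {l : List ℕ} (hl : l ∈ (children G r u).val.map (cdl G r)) :
    l ∈ (labels G r (levelSet G r i)).toFinset := by
  obtain ⟨v, hv, rfl⟩ := Multiset.mem_map.mp hl
  exact Multiset.mem_toFinset.mpr
    (Multiset.mem_map_of_mem _ (mem_levelSet_of_mem_children hG hu hv))

theorem cdl_eq_sort_children (hG : G.Connected) {i : ℕ} {u : V} (hu : u ∈ levelSet G r (i + 1))
    (hur : u ≠ r) :
    cdl G r u = Multiset.sort (((children G r u).val.map (cdl G r)).map
      (compress (labels G r (levelSet G r i)).toFinset)) (· ≤ ·) := by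
  rw [cdl_eq_labelAt hu, labelAt, image_labelAt_levelSet, Multiset.map_map]
  split_ifs with hleaf
  · rw [children_eq_empty_of_isLeaf hG hur hleaf, Finset.empty_val, Multiset.map_zero,
      Multiset.sort_zero]
  · congr 1
    exact Multiset.map_congr rfl fun v hv => by
      rw [Function.comp_apply, cdl_eq_labelAt (mem_levelSet_of_mem_children hG hu hv)]

end Labels

section TwoTrees

variable {V' : Type*} [Fintype V] [Fintype V'] {G : SimpleGraph V} {r : V}
  {G' : SimpleGraph V'} {r' : V'}

theorem map_cdl_children_eq_of_ne_root (hG : G.Connected) (hG' : G'.Connected) {i : ℕ}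
    (hlab : labels G r (levelSet G r i) = labels G' r' (levelSet G' r' i))
    {u : V} {u' : V'} (hu : u ∈ levelSet G r (i + 1)) (hu' : u' ∈ levelSet G' r' (i + 1))
    (hur : u ≠ r) (hur' : u' ≠ r') (hcdl : cdl G r u = cdl G' r' u') :
    (children G r u).val.map (cdl G r) = (children G' r' u').val.map (cdl G' r') := by
  rw [cdl_eq_sort_children hG hu hur, cdl_eq_sort_children hG' hu' hur', ← hlab] at hcdl
  refine Multiset.eq_of_map_eq_of_injOn (compress_strictMonoOn _).injOn
    (fun l hl => mem_labels_of_mem_children hG hu hl)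
    (fun l hl => hlab ▸ mem_labels_of_mem_children hG' hu' hl) ?_
  simpa only [Multiset.sort_eq] using congrArg ((↑) : List ℕ → Multiset ℕ) hcdl

theorem map_cdl_children_eq (hG : G.Connected) (hG' : G'.Connected) {h : ℕ}
    (hh : height G r = h) (hh' : height G' r' = h) (hLL : LevelLabelCondition G r G' r')
    {i : ℕ} (hi : i < h) {u : V} {u' : V'} (hu : u ∈ levelSet G r (i + 1))
    (hu' : u' ∈ levelSet G' r' (i + 1)) (hcdl : cdl G r u = cdl G' r' u') :
    (children G r u).val.map (cdl G r) = (children G' r' u').val.map (cdl G' r') := by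
  have hlab := hLL i (by omega)
  -- A root of degree one is a leaf, so its label is `[]`: there we use the level-label
  -- condition on level `h - 1` directly.
  by_cases hroot : i + 1 = h
  · subst hroot
    rw [← hh, levelSet_height hG, Finset.mem_singleton] at hu
    rw [← hh', levelSet_height hG', Finset.mem_singleton] at hu'
    rw [hu, hu', children_root hG (by omega), children_root hG' (by omega), hh, hh']
    exact hlab
  · exact map_cdl_children_eq_of_ne_root hG hG' hlab hu hu'
      (ne_root_of_mem_levelSet hu (by omega)) (ne_root_of_mem_levelSet hu' (by omega)) hcdl

theorem exists_bijOn_levelSet_of_succ (hG : G.Connected) (hG' : G'.Connected) {h : ℕ}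
    (hh : height G r = h) (hh' : height G' r' = h) (hLL : LevelLabelCondition G r G' r')
    {i : ℕ} (hi : i < h) {ψ : V → V'}
    (hψ : Set.BijOn ψ (levelSet G r (i + 1)) (levelSet G' r' (i + 1)))
    (hψcdl : ∀ u ∈ levelSet G r (i + 1), cdl G' r' (ψ u) = cdl G r u) :
    ∃ ψ' : V → V', (Set.BijOn ψ' (levelSet G r i) (levelSet G' r' i) ∧
        ∀ v ∈ levelSet G r i, cdl G' r' (ψ' v) = cdl G r v) ∧
      ∀ v ∈ levelSet G r i, ψ (parent G r v) = parent G' r' (ψ' v) := by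
  have : Nonempty V' := ⟨r'⟩
  have hψval : (levelSet G' r' (i + 1)).val = (levelSet G r (i + 1)).val.map ψ := by
    rw [← Finset.image_val_of_injOn hψ.injOn]
    congr 1
    exact_mod_cast hψ.image_eq.symm
  -- Matching the pairs (image of the parent, label) gives both required properties at once.
  obtain ⟨ψ', hbij, hψ'⟩ := Finset.exists_bijOn_of_map_eq
    (f := fun v => (ψ (parent G r v), cdl G r v)) (g := fun w => (parent G' r' w, cdl G' r' w))
    (s := levelSet G r i) (t := levelSet G' r' i) <| by
      rw [levelSet_val_eq_bind_children hG (hh ▸ hi),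
        levelSet_val_eq_bind_children hG' (hh' ▸ hi), hψval, Multiset.map_bind,
        Multiset.map_bind, Multiset.bind_map]
      refine Multiset.bind_congr fun u hu => ?_
      have := congrArg (Multiset.map (Prod.mk (ψ u)))
        (map_cdl_children_eq hG hG' hh hh' hLL hi hu (hψ.mapsTo hu) (hψcdl u hu).symm)
      rw [Multiset.map_map, Multiset.map_map] at this
      rw [map_children_val_parent (fun p v => (ψ p, cdl G r v)),
        map_children_val_parent (fun p w => (p, cdl G' r' w))]
      exact this
  exact ⟨ψ', ⟨hbij, fun v hv => (Prod.ext_iff.mp (hψ' v hv)).2⟩,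
    fun v hv => (Prod.ext_iff.mp (hψ' v hv)).1.symm⟩

end TwoTrees

/-- **Lemma 1.** If `(T, r)` and `(T', r')` are rooted trees that satisfy the level-label
condition, with common height `h`, then there exists a collection of bijective maps
`φ_i : T_i → T'_i` for `i ∈ [h]` such that `φ_{i+1}(parent_T v) = parent_{T'}(φ_i v)`
for all `v ∈ T_i` and all `i ∈ [h-1]`. -/
theorem exists_levelwise_bijections {V V' : Type*} [Fintype V] [Fintype V']
    (G : SimpleGraph V) (r : V) (G' : SimpleGraph V') (r' : V')
    (hT : G.IsTree) (hT' : G'.IsTree) (h : ℕ)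
    (hh : height G r = h) (hh' : height G' r' = h)
    (hLL : LevelLabelCondition G r G' r') :
    ∃ φ : ℕ → V → V',
      (∀ i ≤ h, Set.BijOn (φ i) (levelSet G r i) (levelSet G' r' i)) ∧
      (∀ i < h, ∀ v ∈ levelSet G r i, φ (i + 1) (parent G r v) = parent G' r' (φ i v)) := by
  have hG := hT.connected
  have hG' := hT'.connected
  have htop : levelSet G r h = {r} := by rw [← hh, levelSet_height hG]
  have htop' : levelSet G' r' h = {r'} := by rw [← hh', levelSet_height hG']
  have hroot : cdl G r r = cdl G' r' r' := by
    simpa [htop, htop', labels] using hLL h (by omega)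
  obtain ⟨φ, hφ, hpar⟩ := Nat.exists_seq_of_step_down
    (P := fun i ψ => Set.BijOn ψ (levelSet G r i) (levelSet G' r' i) ∧
      ∀ v ∈ levelSet G r i, cdl G' r' (ψ v) = cdl G r v)
    (R := fun i lower upper =>
      ∀ v ∈ levelSet G r i, upper (parent G r v) = parent G' r' (lower v))
    ⟨fun _ => r', by simp [htop, htop', hroot]⟩
    fun i hi ψ hψ => exists_bijOn_levelSet_of_succ hG hG' hh hh' hLL hi hψ.1 hψ.2
  exact ⟨φ, fun i hi => (hφ i hi).1, hpar⟩

end AHU
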